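/- For every weak game G and every position p, player 1 has a positional winning strategy from p if and only if there exists a consistent signature assignment for G whose domain contains p. -/

import Mathlib

def prefixIn {S : Type} (τ : Set (List S)) (f : ℕ → S) : Prop :=
  ∀ k : ℕ, (List.ofFn fun i : Fin (k + 1) => f i) ∈ τ

/-- A two-player game on a graph: positions of player 1 are those satisfying `own1`,
positions of player 2 the others; `rank` is used for the weak winning condition. -/
structure Game (S : Type) where
  succ : S → S → Prop
  own1 : S → Prop
  rank : S → ℕ

namespace Game

variable {S : Type}

def IsPlay (G : Game S) (π : List S) : Prop := π ≠ [] ∧ π.Chain' G.succ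

def Terminal (G : Game S) (p : S) : Prop := ∀ q, ¬ G.succ p q

/-- Does player `l` (`true` = player 1, `false` = player 2) own position `p`? -/
def Owns (G : Game S) (l : Bool) (p : S) : Prop := if l then G.own1 p else ¬ G.own1 p

/-- A strategy for player `l` from `p`, represented as its tree of finite plays. -/
def IsStrategy (G : Game S) (l : Bool) (p : S) (τ : Set (List S)) : Prop :=
  [p] ∈ τ ∧
  (∀ π ∈ τ, G.IsPlay π ∧ π.head? = some p) ∧
  (∀ π ∈ τ, π ≠ [p] → π.dropLast ∈ τ) ∧
  (∀ π ∈ τ, ∀ q, π.getLast? = some q → G.Owns l q → (∃ q', G.succ q q') →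
    ∃! q', G.succ q q' ∧ π ++ [q'] ∈ τ) ∧
  (∀ π ∈ τ, ∀ q, π.getLast? = some q → ¬ G.Owns l q → ∀ q', G.succ q q' → π ++ [q'] ∈ τ)

/-- A strategy is positional if the chosen successor depends only on the current position. -/
def Positional (G : Game S) (l : Bool) (τ : Set (List S)) : Prop :=
  ∀ π₁ π₂ q q₁ q₂, π₁ ∈ τ → π₂ ∈ τ →
    π₁.getLast? = some q → π₂.getLast? = some q → G.Owns l q →
    π₁ ++ [q₁] ∈ τ → π₂ ++ [q₂] ∈ τ → q₁ = q₂

/-- An infinite play is winning for player `l` iff its eventually-constant rank has the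
right parity (even for player 1, odd for player 2). -/
def InfWin (G : Game S) (l : Bool) (f : ℕ → S) : Prop :=
  ∃ N, (∀ j, N ≤ j → G.rank (f j) = G.rank (f N)) ∧
    G.rank (f N) % 2 = (if l then 0 else 1)

/-- A winning strategy: every complete finite play following it ends in an opponent
position, and every infinite play following it has the right limit-rank parity. -/
def IsWinningStrategy (G : Game S) (l : Bool) (p : S) (τ : Set (List S)) : Prop :=
  G.IsStrategy l p τ ∧
  (∀ π ∈ τ, ∀ q, π.getLast? = some q → G.Terminal q → ¬ G.Owns l q) ∧
  (∀ f : ℕ → S, prefixIn τ f → G.InfWin l f)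

end Game

/-- A weak game: finitely branching, with ranks non-increasing along edges. -/
structure WeakGame (S : Type) extends Game S where
  finBranch : ∀ p, {q | succ p q}.Finite
  rank_mono : ∀ p q, succ p q → rank q ≤ rank p

/-- Lexicographic (non-strict) order on pairs of naturals. -/
def lexLe (x y : ℕ × ℕ) : Prop := x.1 < y.1 ∨ (x.1 = y.1 ∧ x.2 ≤ y.2)

/-- Lexicographic strict order on pairs of naturals. -/
def lexLt (x y : ℕ × ℕ) : Prop := x.1 < y.1 ∨ (x.1 = y.1 ∧ x.2 < y.2)

/-- A consistent signature assignment for a game: a partial map `α` to ℕ such that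
at player-1 positions of its domain some successor stays in the domain with
lexicographically non-increasing `(rank, α)` (strictly decreasing when the rank is odd),
and at player-2 positions of the domain all successors satisfy this. -/
def ConsistentSig {S : Type} (G : Game S) (α : S → Option ℕ) : Prop :=
  (∀ p m, α p = some m → G.own1 p →
    ∃ p', G.succ p p' ∧ ∃ m', α p' = some m' ∧
      lexLe (G.rank p', m') (G.rank p, m) ∧
      (G.rank p % 2 = 1 → lexLt (G.rank p', m') (G.rank p, m))) ∧
  (∀ p m, α p = some m → ¬ G.own1 p →
    ∀ p', G.succ p p' → ∃ m', α p' = some m' ∧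
      lexLe (G.rank p', m') (G.rank p, m) ∧
      (G.rank p % 2 = 1 → lexLt (G.rank p', m') (G.rank p, m)))

/-!
From a consistent signature assignment `α`, player 1 moves at each of her positions in the domain
of `α` to a successor witnessing consistency. Plays then stay in the domain of `α`, and along them
the pairs `(rank, α)` never increase in the well-founded lexicographic order on `ℕ × ℕ`; so they
are eventually constant, and since they strictly decrease at odd rank, the limit rank is even.

Conversely, from a positional winning strategy `τ`, let `α` be defined on the positions `τ`
reaches, with `α q` the largest number of consecutive rank-preserving `τ`-moves from `q` if the
rank of `q` is odd, and `0` otherwise. By positionality such moves can be appended to any play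
ending in `q`; were their runs unbounded, König's lemma (the game is finitely branching) would give
an infinite play following `τ` with odd limit rank. So `α q` is finite, and it drops along every
rank-preserving move from an odd-rank position.
-/

lemma lexLe_iff_toLex_le (x y : ℕ × ℕ) : lexLe x y ↔ toLex x ≤ toLex y :=
  Prod.Lex.le_iff.symm

lemma lexLt_iff_toLex_lt (x y : ℕ × ℕ) : lexLt x y ↔ toLex x < toLex y :=
  Prod.Lex.lt_iff.symm

theorem exists_stable_even_of_lexLe {r m : ℕ → ℕ}
    (hle : ∀ k, lexLe (r (k + 1), m (k + 1)) (r k, m k))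
    (hlt : ∀ k, r k % 2 = 1 → lexLt (r (k + 1), m (k + 1)) (r k, m k)) :
    ∃ N, (∀ j, N ≤ j → r j = r N) ∧ r N % 2 = 0 := by
  have hanti : Antitone fun k => toLex (r k, m k) :=
    antitone_nat_of_succ_le fun k => (lexLe_iff_toLex_le _ _).1 (hle k)
  obtain ⟨N, hN⟩ := WellFoundedLT.antitone_chain_condition hanti
  refine ⟨N, fun j hj => (congrArg Prod.fst (toLex.injective (hN j hj))).symm, ?_⟩
  by_contra hodd
  have hdrop := (lexLt_iff_toLex_lt _ _).1 (hlt N (by omega))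
  exact hdrop.ne (hN (N + 1) N.le_succ).symm

section Paths

variable {α : Type*} (R : α → α → Prop)

def HasPathOfLength (x : α) (n : ℕ) : Prop :=
  ∃ f : ℕ → α, f 0 = x ∧ ∀ k < n, R (f k) (f (k + 1))

noncomputable def pathHeight (x : α) : ℕ := sSup {n | HasPathOfLength R x n}

variable {R}

lemma hasPathOfLength_zero (x : α) : HasPathOfLength R x 0 :=
  ⟨fun _ => x, rfl, fun _ hk => absurd hk (Nat.not_lt_zero _)⟩

lemma HasPathOfLength.mono {x : α} {m n : ℕ} (h : HasPathOfLength R x n) (hmn : m ≤ n) :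
    HasPathOfLength R x m :=
  let ⟨f, hf0, hf⟩ := h
  ⟨f, hf0, fun k hk => hf k (by omega)⟩

lemma hasPathOfLength_succ_iff {x : α} {n : ℕ} :
    HasPathOfLength R x (n + 1) ↔ ∃ y, R x y ∧ HasPathOfLength R y n := by
  constructor
  · rintro ⟨f, rfl, hf⟩
    exact ⟨f 1, hf 0 n.succ_pos, fun k => f (k + 1), rfl, fun k hk => hf (k + 1) (by omega)⟩
  · rintro ⟨y, hxy, f, rfl, hf⟩
    refine ⟨fun | 0 => x | k + 1 => f k, rfl, fun k hk => ?_⟩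
    cases k with
    | zero => exact hxy
    | succ k => exact hf k (by omega)

theorem exists_seq_of_forall_hasPathOfLength (hfin : ∀ x, {y | R x y}.Finite) {x : α}
    (h : ∀ n, HasPathOfLength R x n) : ∃ f : ℕ → α, f 0 = x ∧ ∀ k, R (f k) (f (k + 1)) := by
  have step : ∀ x : {x // ∀ n, HasPathOfLength R x n},
      ∃ y : {x // ∀ n, HasPathOfLength R x n}, R x y := by
    rintro ⟨x, hx⟩
    by_contra! hstuck
    have hbound : ∀ y, ∃ n, R x y → ¬ HasPathOfLength R y n := fun y => by
      by_contra! hy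
      exact hstuck ⟨y, fun n => (hy n).2⟩ (hy 0).1
    choose b hb using hbound
    obtain ⟨y, hxy, hy⟩ := hasPathOfLength_succ_iff.1 (hx ((hfin x).toFinset.sup b + 1))
    exact hb y hxy (hy.mono (Finset.le_sup ((hfin x).mem_toFinset.2 hxy)))
  choose next hnext using step
  exact ⟨fun k => (next^[k] ⟨x, h⟩).1, rfl, fun k => by
    simpa only [Function.iterate_succ_apply'] using hnext _⟩

lemma bddAbove_hasPathOfLength (hfin : ∀ x, {y | R x y}.Finite) {x : α}
    (hx : ¬ ∃ f : ℕ → α, f 0 = x ∧ ∀ k, R (f k) (f (k + 1))) :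
    BddAbove {n | HasPathOfLength R x n} := by
  by_contra hunb
  refine hx (exists_seq_of_forall_hasPathOfLength hfin fun n => ?_)
  obtain ⟨m, hm, hnm⟩ := not_bddAbove_iff.1 hunb n
  exact HasPathOfLength.mono hm hnm.le

lemma pathHeight_succ_le {x y : α} (hxy : R x y) (hx : BddAbove {n | HasPathOfLength R x n}) :
    pathHeight R y + 1 ≤ pathHeight R x := by
  have hy : BddAbove {n | HasPathOfLength R y n} := by
    obtain ⟨b, hb⟩ := hx
    exact ⟨b, fun n hn => Nat.le_of_succ_le (hb (hasPathOfLength_succ_iff.2 ⟨y, hxy, hn⟩))⟩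
  have hpath : HasPathOfLength R y (pathHeight R y) :=
    Nat.sSup_mem ⟨0, hasPathOfLength_zero y⟩ hy
  exact le_csSup hx (hasPathOfLength_succ_iff.2 ⟨y, hxy, hpath⟩)

end Paths

namespace Game

variable {S : Type} {G : Game S} {l : Bool} {p : S} {τ : Set (List S)}

lemma IsStrategy.take_mem (hs : G.IsStrategy l p τ) {π : List S} (hπ : π ∈ τ) {n : ℕ}
    (hn : 0 < n) : π.take n ∈ τ := by
  obtain ⟨d, hd⟩ : ∃ d, π.length - n = d := ⟨_, rfl⟩
  induction d generalizing π with
  | zero => rwa [List.take_of_length_le (by omega)]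
  | succ d ih =>
    have hne : π ≠ [p] := by rintro rfl; simp at hd; omega
    have := ih (hs.2.2.1 π hπ hne) (by rw [List.length_dropLast]; omega)
    rwa [List.dropLast_eq_take, List.take_take, min_eq_left (by omega)] at this

lemma exists_mem_apply_of_prefixIn {f : ℕ → S} (hf : prefixIn τ f) (k : ℕ) :
    ∃ π ∈ τ, f k ∈ π :=
  ⟨_, hf k, List.mem_ofFn.2 ⟨Fin.last k, rfl⟩⟩

lemma rel_of_prefixIn {R : S → S → Prop} (hτ : ∀ π ∈ τ, π.IsChain R) {f : ℕ → S}
    (hf : prefixIn τ f) (k : ℕ) : R (f k) (f (k + 1)) := by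
  have h := List.isChain_iff_getElem.1 (hτ _ (hf (k + 1))) k (by simp)
  simp only [List.getElem_ofFn] at h
  exact h

def FollowsMove (G : Game S) (σ : S → S) (q q' : S) : Prop :=
  G.succ q q' ∧ (G.own1 q → q' = σ q)

def IsClosedUnder (G : Game S) (σ : S → S) (D : Set S) : Prop :=
  ∀ q ∈ D, (G.own1 q → G.succ q (σ q) ∧ σ q ∈ D) ∧ (¬ G.own1 q → ∀ q', G.succ q q' → q' ∈ D)

def followPlays (G : Game S) (σ : S → S) (D : Set S) (p : S) : Set (List S) :=
  {π | π.head? = some p ∧ π.IsChain (G.FollowsMove σ) ∧ ∀ q ∈ π, q ∈ D}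

variable {σ : S → S} {D : Set S}

lemma mem_of_mem_followPlays {π : List S} (hπ : π ∈ G.followPlays σ D p) {q : S}
    (hlast : π.getLast? = some q) : q ∈ D :=
  hπ.2.2 q (List.mem_of_getLast? hlast)

lemma append_mem_followPlays {π : List S} (hπ : π ∈ G.followPlays σ D p) {q q' : S}
    (hlast : π.getLast? = some q) (hmove : G.FollowsMove σ q q') (hq' : q' ∈ D) :
    π ++ [q'] ∈ G.followPlays σ D p := by
  obtain ⟨hhead, hchain, hmem⟩ := hπ
  refine ⟨?_, List.isChain_append.2 ⟨hchain, List.isChain_singleton q', ?_⟩, ?_⟩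
  · rw [List.head?_append, hhead, Option.some_or]
  · simp_all
  · simpa [or_imp, forall_and] using ⟨hmem, hq'⟩

lemma followsMove_of_append_mem_followPlays {π : List S} {q q' : S}
    (hπ : π ++ [q'] ∈ G.followPlays σ D p) (hlast : π.getLast? = some q) :
    G.FollowsMove σ q q' :=
  (List.isChain_append.1 hπ.2.1).2.2 q hlast q' rfl

lemma followPlays_isStrategy (hD : G.IsClosedUnder σ D) (hp : p ∈ D) :
    G.IsStrategy true p (G.followPlays σ D p) := by
  refine ⟨⟨rfl, List.isChain_singleton p, by simpa using hp⟩, fun π hπ => ⟨⟨?_, ?_⟩, hπ.1⟩,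
    fun π hπ hne => ?_, fun π hπ q hlast hown _ => ?_, fun π hπ q hlast hown q' hq' => ?_⟩
  · rintro rfl
    cases hπ.1
  · exact hπ.2.1.imp fun _ _ h => h.1
  · obtain ⟨hhead, hchain, hmem⟩ := hπ
    obtain _ | ⟨a, _ | ⟨b, t⟩⟩ := π
    · cases hhead
    · cases Option.some_injective _ hhead
      exact absurd rfl hne
    · exact ⟨by simpa [List.dropLast_cons_cons] using hhead, hchain.prefix (List.dropLast_prefix _),
        fun q hq => hmem q (List.dropLast_subset _ hq)⟩
  · obtain ⟨hsucc, hσD⟩ := (hD q (mem_of_mem_followPlays hπ hlast)).1 hown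
    exact ⟨σ q, ⟨hsucc, append_mem_followPlays hπ hlast ⟨hsucc, fun _ => rfl⟩ hσD⟩,
      fun q' hq' => (followsMove_of_append_mem_followPlays hq'.2 hlast).2 hown⟩
  · exact append_mem_followPlays hπ hlast ⟨hq', fun h => absurd h hown⟩
      ((hD q (mem_of_mem_followPlays hπ hlast)).2 hown q' hq')

lemma followPlays_positional : G.Positional true (G.followPlays σ D p) :=
  fun _ _ _ _ _ _ _ hl₁ hl₂ hown h₁ h₂ =>
    ((followsMove_of_append_mem_followPlays h₁ hl₁).2 hown).trans
      ((followsMove_of_append_mem_followPlays h₂ hl₂).2 hown).symm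

lemma not_terminal_of_mem_followPlays (hD : G.IsClosedUnder σ D) {π : List S}
    (hπ : π ∈ G.followPlays σ D p) {q : S} (hlast : π.getLast? = some q) (hown : G.own1 q) :
    ¬ G.Terminal q :=
  fun hterm => hterm (σ q) ((hD q (mem_of_mem_followPlays hπ hlast)).1 hown).1

lemma infWin_true_of_sig_step {α : S → Option ℕ} {f : ℕ → S} (hdom : ∀ k, (α (f k)).isSome)
    (hstep : ∀ k m, α (f k) = some m → ∃ m', α (f (k + 1)) = some m' ∧
      lexLe (G.rank (f (k + 1)), m') (G.rank (f k), m) ∧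
      (G.rank (f k) % 2 = 1 → lexLt (G.rank (f (k + 1)), m') (G.rank (f k), m))) :
    G.InfWin true f := by
  set m : ℕ → ℕ := fun k => (α (f k)).get (hdom k)
  have hm : ∀ k, α (f k) = some (m k) := fun k => (Option.some_get _).symm
  have hsig : ∀ k, lexLe (G.rank (f (k + 1)), m (k + 1)) (G.rank (f k), m k) ∧
      (G.rank (f k) % 2 = 1 → lexLt (G.rank (f (k + 1)), m (k + 1)) (G.rank (f k), m k)) := by
    intro k
    obtain ⟨m', hm', hsig⟩ := hstep k (m k) (hm k)
    rwa [Option.some_injective _ (hm'.symm.trans (hm (k + 1)))] at hsig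
  exact exists_stable_even_of_lexLe (fun k => (hsig k).1) (fun k => (hsig k).2)

def Reaches (τ : Set (List S)) (q : S) : Prop := ∃ π ∈ τ, π.getLast? = some q

def StratEdge (G : Game S) (τ : Set (List S)) (q q' : S) : Prop :=
  G.succ q q' ∧ ∃ π ∈ τ, π.getLast? = some q ∧ π ++ [q'] ∈ τ

lemma StratEdge.reaches {q q' : S} (h : G.StratEdge τ q q') : Reaches τ q' :=
  let ⟨_, π, _, _, hπ'⟩ := h
  ⟨π ++ [q'], hπ', List.getLast?_concat⟩

lemma append_mem_of_stratEdge (hs : G.IsStrategy true p τ) (hpos : G.Positional true τ)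
    {π : List S} {q q' : S} (hπ : π ∈ τ) (hlast : π.getLast? = some q)
    (hE : G.StratEdge τ q q') : π ++ [q'] ∈ τ := by
  obtain ⟨hsucc, π', hπ', hlast', hπ'q'⟩ := hE
  by_cases hown : G.own1 q
  · obtain ⟨y, ⟨-, hy⟩, -⟩ := hs.2.2.2.1 π hπ q hlast hown ⟨q', hsucc⟩
    rwa [hpos π π' q y q' hπ hπ' hlast hlast' hown hy hπ'q'] at hy
  · exact hs.2.2.2.2 π hπ q hlast hown q' hsucc

lemma exists_prefixIn_of_stratEdge (hs : G.IsStrategy true p τ) (hpos : G.Positional true τ)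
    {π₀ : List S} (hπ₀ : π₀ ∈ τ) {f : ℕ → S} (hlast : π₀.getLast? = some (f 0))
    (hf : ∀ k, G.StratEdge τ (f k) (f (k + 1))) :
    ∃ g : ℕ → S, prefixIn τ g ∧ ∃ d, ∀ k, g (d + k) = f k := by
  set L := π₀.length
  have hL : 0 < L := List.length_pos_iff.2 fun h => by simp [h] at hlast
  -- `g` is `π₀` followed by `f 1, f 2, …` (`f 0` is the last entry of `π₀`).
  set g : ℕ → S := fun i => if h : i < L then π₀[i] else f (i + 1 - L)
  have hg : ∀ n, (List.ofFn fun i : Fin (L + n) => g i) =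
      π₀ ++ List.ofFn fun i : Fin n => f (i + 1) := by
    intro n
    refine List.ext_getElem (by simp [L]) fun i _ _ => ?_
    simp only [List.getElem_ofFn, List.getElem_append, g]
    split_ifs
    · rfl
    · congr 1; omega
  have hmem : ∀ n, (π₀ ++ List.ofFn fun i : Fin n => f (i + 1)) ∈ τ ∧
      (π₀ ++ List.ofFn fun i : Fin n => f (i + 1)).getLast? = some (f n) := by
    intro n
    induction n with
    | zero => simpa using ⟨hπ₀, hlast⟩
    | succ n ih =>
      rw [List.ofFn_succ_last, ← List.append_assoc]
      simp only [Fin.val_castSucc, Fin.val_last]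
      exact ⟨append_mem_of_stratEdge hs hpos ih.1 ih.2 (hf n), List.getLast?_concat⟩
  refine ⟨g, fun k => ?_, L - 1, fun k => ?_⟩
  · have hpre : (List.ofFn fun i : Fin (k + 1) => g i) =
        (List.ofFn fun i : Fin (L + k) => g i).take (k + 1) :=
      List.ext_getElem (by simp; omega) fun i _ _ => by
        simp only [List.getElem_take, List.getElem_ofFn]
    rw [hpre, hg]
    exact hs.take_mem (hmem k).1 k.succ_pos
  · cases k with
    | zero =>
      rw [List.getLast?_eq_getElem?, List.getElem?_eq_getElem (by omega)] at hlast
      simpa [g, hL] using hlast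
    | succ k =>
      simp only [g, dif_neg (show ¬ L - 1 + (k + 1) < L by omega)]
      congr 1; omega

def SameRankEdge (G : Game S) (τ : Set (List S)) (q q' : S) : Prop :=
  G.StratEdge τ q q' ∧ G.rank q' = G.rank q

lemma not_exists_sameRankEdge_seq (hw : G.IsWinningStrategy true p τ)
    (hpos : G.Positional true τ) {q : S} (hq : Reaches τ q) (hodd : G.rank q % 2 = 1) :
    ¬ ∃ f : ℕ → S, f 0 = q ∧ ∀ k, G.SameRankEdge τ (f k) (f (k + 1)) := by
  rintro ⟨f, rfl, hf⟩
  have hrank : ∀ k, G.rank (f k) = G.rank (f 0) := fun k => by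
    induction k with
    | zero => rfl
    | succ k ih => exact (hf k).2.trans ih
  obtain ⟨π₀, hπ₀, hlast⟩ := hq
  obtain ⟨g, hg, d, hgf⟩ := exists_prefixIn_of_stratEdge hw.1 hpos hπ₀ hlast fun k => (hf k).1
  obtain ⟨N, hN, heven⟩ := hw.2.2 g hg
  have hstable := hN (d + N) (by omega)
  rw [hgf, hrank] at hstable
  rw [← hstable] at heven
  simp [hodd] at heven

noncomputable def sigOf (G : Game S) (τ : Set (List S)) (q : S) : ℕ :=
  if G.rank q % 2 = 1 then pathHeight (G.SameRankEdge τ) q else 0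

open Classical in
noncomputable def sigAssignment (G : Game S) (τ : Set (List S)) (q : S) : Option ℕ :=
  if Reaches τ q then some (G.sigOf τ q) else none

lemma sigAssignment_eq_some {q : S} {m : ℕ} :
    G.sigAssignment τ q = some m ↔ Reaches τ q ∧ G.sigOf τ q = m := by
  unfold sigAssignment
  split_ifs <;> simp_all

end Game

section ConsistentSig

variable {S : Type} {G : Game S} {α : S → Option ℕ}

lemma ConsistentSig.exists_move (hα : ConsistentSig G α) :
    ∃ σ : S → S, ∀ q m, α q = some m → G.own1 q → G.succ q (σ q) ∧
      ∃ m', α (σ q) = some m' ∧ lexLe (G.rank (σ q), m') (G.rank q, m) ∧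
        (G.rank q % 2 = 1 → lexLt (G.rank (σ q), m') (G.rank q, m)) := by
  have hmove : ∀ q, ∃ q', ∀ m, α q = some m → G.own1 q → G.succ q q' ∧
      ∃ m', α q' = some m' ∧ lexLe (G.rank q', m') (G.rank q, m) ∧
        (G.rank q % 2 = 1 → lexLt (G.rank q', m') (G.rank q, m)) := by
    intro q
    by_cases h : ∃ m, α q = some m ∧ G.own1 q
    · obtain ⟨m, hm, hown⟩ := h
      obtain ⟨q', hq'⟩ := hα.1 q m hm hown
      exact ⟨q', fun m' hm' _ => Option.some_injective _ (hm.symm.trans hm') ▸ hq'⟩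
    · exact ⟨q, fun m hm hown => absurd ⟨m, hm, hown⟩ h⟩
  choose σ hσ using hmove
  exact ⟨σ, hσ⟩

theorem ConsistentSig.exists_positional_winningStrategy (hα : ConsistentSig G α) {p : S}
    (hp : (α p).isSome) :
    ∃ τ, G.IsWinningStrategy true p τ ∧ G.Positional true τ := by
  obtain ⟨σ, hσ⟩ := hα.exists_move
  set D := {q | (α q).isSome}
  have hmove : ∀ q q' m, α q = some m → G.FollowsMove σ q q' → ∃ m', α q' = some m' ∧
      lexLe (G.rank q', m') (G.rank q, m) ∧
      (G.rank q % 2 = 1 → lexLt (G.rank q', m') (G.rank q, m)) := by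
    rintro q q' m hm ⟨hsucc, hσq⟩
    by_cases hown : G.own1 q
    · exact hσq hown ▸ (hσ q m hm hown).2
    · exact hα.2 q m hm hown q' hsucc
  have hD : G.IsClosedUnder σ D := by
    intro q hq
    obtain ⟨m, hm⟩ := Option.isSome_iff_exists.1 hq
    refine ⟨fun hown => ⟨(hσ q m hm hown).1, ?_⟩, fun hown q' hq' => ?_⟩
    · obtain ⟨m', hm', -⟩ := (hσ q m hm hown).2
      simp [D, hm']
    · obtain ⟨m', hm', -⟩ := hα.2 q m hm hown q' hq'
      simp [D, hm']
  refine ⟨G.followPlays σ D p, ⟨Game.followPlays_isStrategy hD hp,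
    fun π hπ q hlast hterm hown => Game.not_terminal_of_mem_followPlays hD hπ hlast hown hterm,
    fun f hf => Game.infWin_true_of_sig_step (α := α) (fun k => ?_) fun k m hm => ?_⟩,
    Game.followPlays_positional⟩
  · obtain ⟨π, hπ, hfk⟩ := Game.exists_mem_apply_of_prefixIn hf k
    exact hπ.2.2 _ hfk
  · exact hmove _ _ m hm (Game.rel_of_prefixIn (fun π hπ => hπ.2.1) hf k)

end ConsistentSig

namespace WeakGame

variable {S : Type} {G : WeakGame S} {p : S} {τ : Set (List S)}

lemma sigOf_stratEdge (hw : G.IsWinningStrategy true p τ) (hpos : G.Positional true τ)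
    {q q' : S} (hq : Game.Reaches τ q) (hE : G.StratEdge τ q q') :
    lexLe (G.rank q', G.sigOf τ q') (G.rank q, G.sigOf τ q) ∧
      (G.rank q % 2 = 1 → lexLt (G.rank q', G.sigOf τ q') (G.rank q, G.sigOf τ q)) := by
  rcases (G.rank_mono q q' hE.1).lt_or_eq with hlt | heq
  · exact ⟨Or.inl hlt, fun _ => Or.inl hlt⟩
  by_cases hodd : G.rank q % 2 = 1
  · have hbdd := bddAbove_hasPathOfLength (fun x => (G.finBranch x).subset fun _ hy => hy.1.1)
      (Game.not_exists_sameRankEdge_seq hw hpos hq hodd)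
    have hheight := pathHeight_succ_le ⟨hE, heq⟩ hbdd
    have hlt : G.sigOf τ q' < G.sigOf τ q := by
      simp only [Game.sigOf, heq, if_pos hodd]
      omega
    exact ⟨Or.inr ⟨heq, hlt.le⟩, fun _ => Or.inr ⟨heq, hlt⟩⟩
  · have hsig : G.sigOf τ q' = G.sigOf τ q := by simp only [Game.sigOf, heq, if_neg hodd]
    exact ⟨Or.inr ⟨heq, hsig.le⟩, fun h => absurd h hodd⟩

theorem consistentSig_sigAssignment (hw : G.IsWinningStrategy true p τ)
    (hpos : G.Positional true τ) : ConsistentSig G.toGame (G.sigAssignment τ) := by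
  have hstep : ∀ q m q', G.sigAssignment τ q = some m → G.StratEdge τ q q' →
      ∃ m', G.sigAssignment τ q' = some m' ∧ lexLe (G.rank q', m') (G.rank q, m) ∧
        (G.rank q % 2 = 1 → lexLt (G.rank q', m') (G.rank q, m)) := by
    intro q m q' hm hE
    obtain ⟨hq, rfl⟩ := Game.sigAssignment_eq_some.1 hm
    exact ⟨_, Game.sigAssignment_eq_some.2 ⟨hE.reaches, rfl⟩, sigOf_stratEdge hw hpos hq hE⟩
  refine ⟨fun q m hm hown => ?_, fun q m hm hown q' hq' => ?_⟩
  · obtain ⟨⟨π, hπ, hlast⟩, -⟩ := Game.sigAssignment_eq_some.1 hm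
    have hmove : ∃ q', G.succ q q' := by
      by_contra! hterm
      exact hw.2.1 π hπ q hlast hterm hown
    obtain ⟨q', ⟨hq', hπq'⟩, -⟩ := hw.1.2.2.2.1 π hπ q hlast hown hmove
    exact ⟨q', hq', hstep q m q' hm ⟨hq', π, hπ, hlast, hπq'⟩⟩
  · obtain ⟨⟨π, hπ, hlast⟩, -⟩ := Game.sigAssignment_eq_some.1 hm
    exact hstep q m q' hm ⟨hq', π, hπ, hlast, hw.1.2.2.2.2 π hπ q hlast hown q' hq'⟩

end WeakGame

/-- Player 1 has a positional winning strategy from `p` iff some consistent signature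
assignment is defined at `p`. -/
theorem player1_positional_win_iff_consistentSig {S : Type} (G : WeakGame S) (p : S) :
    (∃ τ, G.toGame.IsWinningStrategy true p τ ∧ G.toGame.Positional true τ) ↔
      ∃ α : S → Option ℕ, ConsistentSig G.toGame α ∧ (α p).isSome := by
  constructor
  · rintro ⟨τ, hw, hpos⟩
    refine ⟨G.sigAssignment τ, WeakGame.consistentSig_sigAssignment hw hpos, ?_⟩
    rw [Option.isSome_iff_exists]
    exact ⟨_, Game.sigAssignment_eq_some.2 ⟨⟨[p], hw.1.1, rfl⟩, rfl⟩⟩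
  · rintro ⟨α, hα, hp⟩
    exact hα.exists_positional_winningStrategy hp
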